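/- Let u, v : ℝ³ → ℝ be smooth functions of (x, y, t) satisfying the Manakov–Santini system: u_{xt} − u_{yy} + (u − v_y) u_{xx} + v_x u_{xy} + u_x² = 0 and v_{xt} − v_{yy} + (u − v_y) v_{xx} + v_x v_{xy} = 0. Then the functions a := v_x and b := u − v_y satisfy the system (MS2): ∂_x(a_t + a a_y + b a_x) = ∂_y(a_y) and ∂_x(b_t + b b_x − a b_y) = ∂_y(b_y − 2 a b_x). -/

import Mathlib

noncomputable section

/-- Partial derivative of `f` along the `i`-th coordinate direction on `ℝⁿ`.
Coordinates on `ℝ³` are `(x, y, t) = (0, 1, 2)`. -/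
def pd {n : ℕ} (i : Fin n) (f : (Fin n → ℝ) → ℝ) : (Fin n → ℝ) → ℝ :=
  fun x => fderiv ℝ f x (Pi.single i 1)

/-- First equation of system (MS2): `(a_t + a a_y + b a_x)_x = (a_y)_y`. -/
def MS2eq1 (a b : (Fin 3 → ℝ) → ℝ) : Prop :=
  ∀ x : Fin 3 → ℝ,
    pd 0 (fun y => pd 2 a y + a y * pd 1 a y + b y * pd 0 a y) x
      = pd 1 (pd 1 a) x

/-- Second equation of system (MS2): `(b_t + b b_x − a b_y)_x = (b_y − 2 a b_x)_y`. -/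
def MS2eq2 (a b : (Fin 3 → ℝ) → ℝ) : Prop :=
  ∀ x : Fin 3 → ℝ,
    pd 0 (fun y => pd 2 b y + b y * pd 0 b y - a y * pd 1 b y) x
      = pd 1 (fun y => pd 1 b y - 2 * a y * pd 0 b y) x

/-! Both equations of (MS2) are identities of differential algebra that use only the Leibniz
rule and the commutation of the partial derivatives. Writing the `v`-equation as
`a_t + a a_y + b a_x = v_yy`, the first equation is its `x`-derivative; the second is the
`u`-equation minus the `y`-derivative of the `v`-equation. We therefore prove both for three
commuting derivations of an arbitrary commutative ring, and apply this to the algebra of smooth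
functions, where partial derivatives commute by the symmetry of second derivatives. -/

open scoped ContDiff

section SmoothFunctions

variable {E F : Type*} [NormedAddCommGroup E] [NormedSpace ℝ E]
  [NormedAddCommGroup F] [NormedSpace ℝ F]

theorem ContDiff.fderiv_apply_const {f : E → F} (hf : ContDiff ℝ ∞ f) (w : E) :
    ContDiff ℝ ∞ (fun x => fderiv ℝ f x w) :=
  (hf.fderiv_right (m := ∞) le_rfl).clm_apply contDiff_const

theorem fderiv_fderiv_apply_const_comm {f : E → F} (hf : ContDiff ℝ ∞ f) (x v w : E) :
    fderiv ℝ (fun y => fderiv ℝ f y w) x v = fderiv ℝ (fun y => fderiv ℝ f y v) x w := by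
  have hf' : Differentiable ℝ (fderiv ℝ f) :=
    (hf.fderiv_right (m := ∞) le_rfl).differentiable (by simp)
  have hsnd : ∀ v w, fderiv ℝ (fun y => fderiv ℝ f y w) x v = fderiv ℝ (fderiv ℝ f) x v w := by
    intro v w
    rw [fderiv_clm_apply (hf' x) (differentiableAt_const w)]
    simp
  rw [hsnd, hsnd]
  exact (hf.contDiffAt.isSymmSndFDerivAt
    (by rw [minSmoothness_of_isRCLikeNormedField]; exact WithTop.coe_le_coe.2 le_top)).eq v w

variable (E) in
def smoothFunctions : Subalgebra ℝ (E → ℝ) where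
  carrier := {f | ContDiff ℝ ∞ f}
  mul_mem' {f g} (hf : ContDiff ℝ ∞ f) (hg : ContDiff ℝ ∞ g) := hf.mul hg
  add_mem' {f g} (hf : ContDiff ℝ ∞ f) (hg : ContDiff ℝ ∞ g) := hf.add hg
  algebraMap_mem' c := (contDiff_const : ContDiff ℝ ∞ fun _ : E => c)

theorem mem_smoothFunctions {f : E → ℝ} : f ∈ smoothFunctions E ↔ ContDiff ℝ ∞ f := Iff.rfl

theorem contDiff_coe_smoothFunctions (f : smoothFunctions E) : ContDiff ℝ ∞ (f : E → ℝ) :=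
  mem_smoothFunctions.1 f.2

theorem differentiable_coe_smoothFunctions (f : smoothFunctions E) :
    Differentiable ℝ (f : E → ℝ) :=
  (contDiff_coe_smoothFunctions f).differentiable (by simp)

def directionalDerivation (w : E) : Derivation ℝ (smoothFunctions E) (smoothFunctions E) :=
  Derivation.mk'
    { toFun f := ⟨fun x => fderiv ℝ (f : E → ℝ) x w,
        mem_smoothFunctions.2 ((contDiff_coe_smoothFunctions f).fderiv_apply_const w)⟩
      map_add' f g := by
        ext x
        simp [fderiv_add (differentiable_coe_smoothFunctions f x)
          (differentiable_coe_smoothFunctions g x)]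
      map_smul' c f := by
        ext x
        simp [fderiv_const_smul (differentiable_coe_smoothFunctions f x)] }
    fun f g => by
      ext x
      simp [fderiv_mul (differentiable_coe_smoothFunctions f x)
        (differentiable_coe_smoothFunctions g x)]

theorem directionalDerivation_comm (v w : E) (f : smoothFunctions E) :
    directionalDerivation v (directionalDerivation w f)
      = directionalDerivation w (directionalDerivation v f) :=
  Subtype.ext <| funext fun x =>
    fderiv_fderiv_apply_const_comm (contDiff_coe_smoothFunctions f) x v w

end SmoothFunctions

/-- Agrees with `pd i` on smooth functions by `rfl`, which transfers the equations both ways. -/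
def pdDerivation {n : ℕ} (i : Fin n) :
    Derivation ℝ (smoothFunctions (Fin n → ℝ)) (smoothFunctions (Fin n → ℝ)) :=
  directionalDerivation (Pi.single i 1)

theorem pdDerivation_comm {n : ℕ} (i j : Fin n) (f : smoothFunctions (Fin n → ℝ)) :
    pdDerivation i (pdDerivation j f) = pdDerivation j (pdDerivation i f) :=
  directionalDerivation_comm _ _ f

namespace Derivation

variable {R A : Type*} [CommRing R] [CommRing A] [Algebra R A] (X Y T : Derivation R A A)

theorem ms2_first_of_manakovSantini (hXY : ∀ f, Y (X f) = X (Y f))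
    (hXT : ∀ f, T (X f) = X (T f)) {u v : A}
    (hv : X (T v) - Y (Y v) + (u - Y v) * X (X v) + X v * X (Y v) = 0) :
    X (T (X v) + X v * Y (X v) + (u - Y v) * X (X v)) = Y (Y (X v)) := by
  have hflux : T (X v) + X v * Y (X v) + (u - Y v) * X (X v) = Y (Y v) := by
    rw [hXY, hXT]
    linear_combination hv
  rw [hflux, hXY, hXY]

theorem ms2_second_of_manakovSantini (hXY : ∀ f, Y (X f) = X (Y f))
    (hYT : ∀ f, T (Y f) = Y (T f)) {u v : A}
    (hu : X (T u) - Y (Y u) + (u - Y v) * X (X u) + X v * X (Y u) + X u ^ 2 = 0)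
    (hv : X (T v) - Y (Y v) + (u - Y v) * X (X v) + X v * X (Y v) = 0) :
    X (T (u - Y v) + (u - Y v) * X (u - Y v) - X v * Y (u - Y v))
      = Y (Y (u - Y v) - 2 * X v * X (u - Y v)) := by
  have h2 : Y (2 : A) = 0 := by exact_mod_cast Y.map_natCast 2
  have hvY := congrArg Y hv
  simp only [map_add, map_sub, leibniz, smul_eq_mul, hXY, hYT, h2, map_zero] at hvY ⊢
  linear_combination hu - hvY

end Derivation

/-- If `(u, v)` solves the Manakov–Santini system `P(u) + u_x² = 0`, `P(v) = 0`,
where `P = ∂_x∂_t − ∂_y² + (u − v_y)∂_x² + v_x ∂_x∂_y`, then `a := v_x` and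
`b := u − v_y` solve system (MS2). -/
theorem manakov_santini_implies_MS2
    (u v : (Fin 3 → ℝ) → ℝ)
    (hu : ContDiff ℝ (⊤ : ℕ∞) u)
    (hv : ContDiff ℝ (⊤ : ℕ∞) v)
    (hMSu : ∀ x : Fin 3 → ℝ,
      pd 0 (pd 2 u) x - pd 1 (pd 1 u) x + (u x - pd 1 v x) * pd 0 (pd 0 u) x
        + pd 0 v x * pd 0 (pd 1 u) x + (pd 0 u x) ^ 2 = 0)
    (hMSv : ∀ x : Fin 3 → ℝ,
      pd 0 (pd 2 v) x - pd 1 (pd 1 v) x + (u x - pd 1 v x) * pd 0 (pd 0 v) x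
        + pd 0 v x * pd 0 (pd 1 v) x = 0) :
    MS2eq1 (pd 0 v) (fun x => u x - pd 1 v x) ∧
    MS2eq2 (pd 0 v) (fun x => u x - pd 1 v x) := by
  let X := pdDerivation (0 : Fin 3)
  let Y := pdDerivation (1 : Fin 3)
  let T := pdDerivation (2 : Fin 3)
  let U : smoothFunctions (Fin 3 → ℝ) := ⟨u, hu⟩
  let V : smoothFunctions (Fin 3 → ℝ) := ⟨v, hv⟩
  have hU : X (T U) - Y (Y U) + (U - Y V) * X (X U) + X V * X (Y U) + X U ^ 2 = 0 := by
    ext x; exact hMSu x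
  have hV : X (T V) - Y (Y V) + (U - Y V) * X (X V) + X V * X (Y V) = 0 := by
    ext x; exact hMSv x
  have hXY := pdDerivation_comm (1 : Fin 3) 0
  exact ⟨fun x => congrFun (congrArg Subtype.val
      (X.ms2_first_of_manakovSantini Y T hXY (pdDerivation_comm 2 0) hV)) x,
    fun x => congrFun (congrArg Subtype.val
      (X.ms2_second_of_manakovSantini Y T hXY (pdDerivation_comm 2 1) hU hV)) x⟩

end
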